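/- Let n ≥ 2 and let v, X ∈ ℝⁿ with ‖v‖ = 1, the last coordinate of v positive, ⟨X, v⟩ = 0 and ‖X‖ < 1. If Q ∈ ℝⁿ satisfies ⟨v, Q⟩ = 0 and the first n − 1 coordinates of Q − ⟨Q, X⟩ • X all vanish, then Q = 0. (Hence, for each such v and X, the linear map sending Q ∈ {Q | ⟨v,Q⟩ = 0} to the first n − 1 coordinates of Q − ⟨Q, X⟩X is injective from the (n−1)-dimensional tangent space T_v S^{n−1} to ℝ^{n−1}, so it is an invertible linear transformation; this is the case v ∈ D of Lemma 3.6.) -/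

import Mathlib

/-!
`R := Q - ⟪Q, X⟫ • X` is orthogonal to `v`, since both `Q` and `X` are, and all its
coordinates but the last vanish; as `v` has a nonzero last coordinate, `R = 0`. Then
`Q = c • X` with `c = ⟪Q, X⟫ = c ‖X‖²`, which forces `c = 0` because `‖X‖ ≠ 1`.
-/

open RealInnerProductSpace

theorem EuclideanSpace.eq_zero_of_inner_eq_zero_of_apply_eq_zero {ι : Type*} [Fintype ι]
    {R v : EuclideanSpace ℝ ι} (j : ι) (hRv : ⟪R, v⟫ = 0) (hvj : v j ≠ 0)
    (hR : ∀ i, i ≠ j → R i = 0) : R = 0 := by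
  have hRj : R j = 0 := by
    have hsum : ∑ i, R i * v i = R j * v j :=
      Finset.sum_eq_single_of_mem j (Finset.mem_univ j) fun i _ hi => by rw [hR i hi, zero_mul]
    have hprod : R j * v j = 0 := by
      rw [← hsum, ← hRv, PiLp.inner_apply]
      simp only [RCLike.inner_apply, conj_trivial, mul_comm]
    exact (mul_eq_zero.mp hprod).resolve_right hvj
  ext i
  by_cases hi : i = j
  · rw [hi, hRj, PiLp.zero_apply]
  · rw [hR i hi, PiLp.zero_apply]

theorem eq_zero_of_eq_inner_smul_of_norm_ne_one {E : Type*} [NormedAddCommGroup E]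
    [InnerProductSpace ℝ E] {Q X : E} (hQ : Q = ⟪Q, X⟫ • X) (hX : ‖X‖ ≠ 1) : Q = 0 := by
  have hc : ⟪Q, X⟫ * (1 - ‖X‖ ^ 2) = 0 := by
    have : ⟪Q, X⟫ = ⟪Q, X⟫ * ‖X‖ ^ 2 := by
      conv_lhs => rw [hQ, real_inner_smul_left, real_inner_self_eq_norm_sq]
    linarith
  have hX2 : 1 - ‖X‖ ^ 2 ≠ 0 := by
    rw [sub_ne_zero, ne_comm, Ne, pow_eq_one_iff_of_nonneg (norm_nonneg X) two_ne_zero]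
    exact hX
  rw [hQ, (mul_eq_zero.mp hc).resolve_right hX2, zero_smul]

/-- Lemma 3.6, case `v ∈ D`: if `‖X‖ < 1`, `⟪X, v⟫ = 0`, `‖v‖ = 1` with positive
last coordinate, and `Q ⊥ v` has the first `n − 1` coordinates of
`Q − ⟪Q, X⟫ • X` all vanishing, then `Q = 0`. -/
theorem kernel_trivial_of_norm_lt_one {n : ℕ} (hn : 2 ≤ n)
    (v X : EuclideanSpace ℝ (Fin n))
    (hvlast : 0 < v ⟨n - 1, by omega⟩)
    (hXv : ⟪X, v⟫ = 0) (hX : ‖X‖ < 1)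
    (Q : EuclideanSpace ℝ (Fin n)) (hQv : ⟪v, Q⟫ = 0)
    (hQ : ∀ i : Fin n, (i : ℕ) < n - 1 → (Q - ⟪Q, X⟫ • X) i = 0) :
    Q = 0 := by
  have hRv : ⟪Q - ⟪Q, X⟫ • X, v⟫ = 0 := by
    rw [inner_sub_left, real_inner_smul_left, hXv, real_inner_comm, hQv, mul_zero, sub_zero]
  have hR : Q - ⟪Q, X⟫ • X = 0 :=
    EuclideanSpace.eq_zero_of_inner_eq_zero_of_apply_eq_zero _ hRv hvlast.ne' fun i hi =>
      hQ i (by have := i.isLt; have : (i : ℕ) ≠ n - 1 := fun h => hi (Fin.ext h); omega)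
  exact eq_zero_of_eq_inner_smul_of_norm_ne_one (sub_eq_zero.mp hR) hX.ne
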